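/- arXiv:1708.06908 — 7 statements merged into one kernel-verified Lean document; each statement's English description precedes it below -/
import Mathlib

section
/- Let f : ℝ → ℝ ∪ {∞} be closed, convex, and proper, let a ∈ ℝ^d with a ≠ 0, and define g(x) = f(aᵀx). Then prox_g(x₀) = x₀ + β·a, where β = argmin_β { f(aᵀx₀ + β‖a‖₂²) + (‖a‖₂²/2)β² }. -/
open Set Filter Topology
open scoped RealInnerProductSpace

noncomputable section

/-- `f` is closed (lower semicontinuous), convex, and proper
as an extended-real-valued function. -/
def ClosedConvexProper {E : Type*} [NormedAddCommGroup E] [NormedSpace ℝ E]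
    (f : E → EReal) : Prop :=
  LowerSemicontinuous f ∧
  (∀ (a b : ℝ) (x y : E), 0 ≤ a → 0 ≤ b → a + b = 1 →
    f (a • x + b • y) ≤ (a : EReal) * f x + (b : EReal) * f y) ∧
  (∀ x, f x ≠ ⊥) ∧ (∃ x, f x ≠ ⊤)

/-- `p` is a minimizer of the prox objective of the extended-real-valued `f` at `x₀`. -/
def IsProxPt {E : Type*} [NormedAddCommGroup E] [InnerProductSpace ℝ E]
    (f : E → EReal) (x₀ p : E) : Prop :=
  IsMinOn (fun x => f x + ((1 / 2 * ‖x - x₀‖ ^ 2 : ℝ) : EReal)) Set.univ p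

/-- `p` is a minimizer of the prox objective of the real-valued `f` at `x₀`. -/
def IsProxPtR {E : Type*} [NormedAddCommGroup E] [InnerProductSpace ℝ E]
    (f : E → ℝ) (x₀ p : E) : Prop :=
  IsMinOn (fun x => f x + 1 / 2 * ‖x - x₀‖ ^ 2) Set.univ p

/-!
Write `x = x₀ + t • a + w` with `w ⟂ a`. Then `⟪a, x⟫ = ⟪a, x₀⟫ + t ‖a‖²` and
`‖x - x₀‖² = t² ‖a‖² + ‖w‖² ≥ t² ‖a‖²`, so the prox objective of `x ↦ f ⟪a, x⟫` at `x` dominates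
the one-dimensional objective at `t`, which is minimal at `β`, where the two objectives agree.
-/

section InnerProductSpace

variable {E : Type*} [NormedAddCommGroup E] [InnerProductSpace ℝ E]

/-- At `a = 0` both sides vanish, as `0 / 0 = 0`. -/
lemma inner_div_norm_sq_mul_norm_sq (a v : E) : ⟪a, v⟫ / ‖a‖ ^ 2 * ‖a‖ ^ 2 = ⟪a, v⟫ := by
  rcases eq_or_ne a 0 with rfl | ha
  · simp
  · exact div_mul_cancel₀ _ (by positivity)

lemma norm_sq_mul_sq_inner_div_norm_sq_le (a v : E) :
    ‖a‖ ^ 2 * (⟪a, v⟫ / ‖a‖ ^ 2) ^ 2 ≤ ‖v‖ ^ 2 := by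
  rcases eq_or_ne a 0 with rfl | ha
  · simp
  have hCS : ⟪a, v⟫ ^ 2 ≤ ‖a‖ ^ 2 * ‖v‖ ^ 2 := by
    rw [← mul_pow, ← sq_abs]
    exact pow_le_pow_left₀ (abs_nonneg _) (abs_real_inner_le_norm a v) 2
  have ha2 : 0 < ‖a‖ ^ 2 := by positivity
  calc ‖a‖ ^ 2 * (⟪a, v⟫ / ‖a‖ ^ 2) ^ 2 = ⟪a, v⟫ ^ 2 / ‖a‖ ^ 2 := by field_simp
    _ ≤ ‖v‖ ^ 2 := by rwa [div_le_iff₀ ha2, mul_comm]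

theorem isProxPt_comp_inner (f : ℝ → EReal) (a x₀ : E) (β : ℝ)
    (hβ : IsMinOn
      (fun t : ℝ => f (⟪a, x₀⟫ + t * ‖a‖ ^ 2) + ((‖a‖ ^ 2 / 2 * t ^ 2 : ℝ) : EReal))
      Set.univ β) :
    IsProxPt (fun x => f ⟪a, x⟫) x₀ (x₀ + β • a) := by
  intro x _
  set t := ⟪a, x - x₀⟫ / ‖a‖ ^ 2
  have hx : ⟪a, x⟫ = ⟪a, x₀⟫ + t * ‖a‖ ^ 2 := by
    rw [inner_div_norm_sq_mul_norm_sq, inner_sub_right]; ring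
  have hp : ⟪a, x₀ + β • a⟫ = ⟪a, x₀⟫ + β * ‖a‖ ^ 2 := by
    rw [inner_add_right, real_inner_smul_right, real_inner_self_eq_norm_sq]
  have hp_dist : 1 / 2 * ‖x₀ + β • a - x₀‖ ^ 2 = ‖a‖ ^ 2 / 2 * β ^ 2 := by
    rw [add_sub_cancel_left, norm_smul, mul_pow, Real.norm_eq_abs, sq_abs]; ring
  have hx_dist : ‖a‖ ^ 2 / 2 * t ^ 2 ≤ 1 / 2 * ‖x - x₀‖ ^ 2 := by
    linarith [norm_sq_mul_sq_inner_div_norm_sq_le a (x - x₀)]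
  calc f ⟪a, x₀ + β • a⟫ + ((1 / 2 * ‖x₀ + β • a - x₀‖ ^ 2 : ℝ) : EReal)
      = f (⟪a, x₀⟫ + β * ‖a‖ ^ 2) + ((‖a‖ ^ 2 / 2 * β ^ 2 : ℝ) : EReal) := by rw [hp, hp_dist]
    _ ≤ f (⟪a, x₀⟫ + t * ‖a‖ ^ 2) + ((‖a‖ ^ 2 / 2 * t ^ 2 : ℝ) : EReal) := hβ (mem_univ t)
    _ ≤ f ⟪a, x⟫ + ((1 / 2 * ‖x - x₀‖ ^ 2 : ℝ) : EReal) := by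
      rw [← hx]; gcongr

end InnerProductSpace

theorem stmt3_general {d : ℕ} (f : ℝ → EReal)
    (a : EuclideanSpace ℝ (Fin d))
    (x₀ : EuclideanSpace ℝ (Fin d)) (β : ℝ)
    (hβ : IsMinOn
      (fun t : ℝ => f (⟪a, x₀⟫ + t * ‖a‖ ^ 2) + ((‖a‖ ^ 2 / 2 * t ^ 2 : ℝ) : EReal))
      Set.univ β) :
    IsProxPt (fun x => f ⟪a, x⟫) x₀ (x₀ + β • a) :=
  isProxPt_comp_inner f a x₀ β hβ

/-- Prox of `g(x) = f(aᵀx)` reduces to a one-dimensional prox problem. -/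
theorem stmt3 {d : ℕ} (f : ℝ → EReal) (hf : ClosedConvexProper f)
    (a : EuclideanSpace ℝ (Fin d)) (ha : a ≠ 0)
    (x₀ : EuclideanSpace ℝ (Fin d)) (β : ℝ)
    (hβ : IsMinOn
      (fun t : ℝ => f (⟪a, x₀⟫ + t * ‖a‖ ^ 2) + ((‖a‖ ^ 2 / 2 * t ^ 2 : ℝ) : EReal))
      Set.univ β) :
    IsProxPt (fun x => f ⟪a, x⟫) x₀ (x₀ + β • a) :=
  stmt3_general f a x₀ β hβ
end
end

section
/- Let f : ℝ → ℝ ∪ {∞} be closed, convex, and proper, let a ∈ ℝⁿ with a ≠ 0, and define g(x₁,…,xₙ) = f(a₁x₁ + ⋯ + aₙxₙ) for x₁,…,xₙ ∈ ℝ^d. Then prox_g(ξ₁,…,ξₙ) = (ξ₁ - a₁v, …, ξₙ - aₙv), where w = prox_{‖a‖₂² f}(a₁ξ₁ + ⋯ + aₙξₙ) and v = (1/‖a‖₂²)(a₁ξ₁ + ⋯ + aₙξₙ - w). -/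
open Set Filter Topology
open scoped RealInnerProductSpace

noncomputable section

/-- Prox of `g(x₁,…,xₙ) = f(a₁x₁ + ⋯ + aₙxₙ)` via the prox of the scaled `f`. -/
theorem stmt4 {n d : ℕ} (f : EuclideanSpace ℝ (Fin d) → EReal)
    (hf : ClosedConvexProper f) (a : Fin n → ℝ) (ha : a ≠ 0)
    (ξ : Fin n → EuclideanSpace ℝ (Fin d)) (w : EuclideanSpace ℝ (Fin d))
    (hw : IsMinOn
      (fun u => ((∑ i, a i ^ 2 : ℝ) : EReal) * f u +
        ((1 / 2 * ‖u - ∑ i, a i • ξ i‖ ^ 2 : ℝ) : EReal))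
      Set.univ w) :
    IsMinOn
      (fun x : Fin n → EuclideanSpace ℝ (Fin d) =>
        f (∑ i, a i • x i) + ((1 / 2 * ∑ i, ‖x i - ξ i‖ ^ 2 : ℝ) : EReal))
      Set.univ
      (fun i => ξ i - a i • ((∑ i, a i ^ 2 : ℝ)⁻¹ • ((∑ i, a i • ξ i) - w))) := by
  obtain ⟨hlsc, hconv, hbot, x₀, hx₀⟩ := hf
  set s : ℝ := ∑ i, a i ^ 2 with hs_def
  have hs : 0 < s := by
    have hex : ∃ i, a i ≠ 0 := by
      by_contra h; push_neg at h; exact ha (funext h)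
    obtain ⟨i, hi⟩ := hex
    exact Finset.sum_pos' (fun j _ => sq_nonneg _) ⟨i, Finset.mem_univ i, by positivity⟩
  set ζ : EuclideanSpace ℝ (Fin d) := ∑ i, a i • ξ i with hζ
  set v : EuclideanSpace ℝ (Fin d) := s⁻¹ • (ζ - w) with hv
  -- sum at the candidate point equals w
  have hsum_p : (∑ i, a i • (ξ i - a i • v)) = w := by
    have h1 : (∑ i, a i • (ξ i - a i • v))
        = ζ - ∑ i, (a i ^ 2) • v := by
      rw [hζ, ← Finset.sum_sub_distrib]
      congr 1; funext i
      rw [smul_sub, smul_smul, sq]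
    rw [h1, ← Finset.sum_smul, ← hs_def, hv, smul_smul, mul_inv_cancel₀ hs.ne', one_smul]
    abel
  -- squared-norm sum at the candidate point
  have hnorm_p : (∑ i, ‖(ξ i - a i • v) - ξ i‖ ^ 2) = s⁻¹ * ‖ζ - w‖ ^ 2 := by
    have h1 : ∀ i, ‖(ξ i - a i • v) - ξ i‖ ^ 2 = a i ^ 2 * (s⁻¹ ^ 2 * ‖ζ - w‖ ^ 2) := by
      intro i
      have : (ξ i - a i • v) - ξ i = (-(a i)) • v := by rw [neg_smul]; abel
      rw [this, norm_smul, hv, norm_smul, mul_pow, mul_pow]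
      simp [abs_of_pos (inv_pos.mpr hs), sq_abs]
    rw [Finset.sum_congr rfl (fun i _ => h1 i), ← Finset.sum_mul, ← hs_def]
    field_simp
  -- Cauchy–Schwarz
  have key : ∀ y : Fin n → EuclideanSpace ℝ (Fin d),
      ‖∑ i, a i • y i‖ ^ 2 ≤ s * ∑ i, ‖y i‖ ^ 2 := by
    intro y
    have h1 : ‖∑ i, a i • y i‖ ≤ ∑ i, |a i| * ‖y i‖ := by
      refine (norm_sum_le _ _).trans_eq ?_
      simp [norm_smul]
    have h2 : (∑ i, |a i| * ‖y i‖) ^ 2 ≤ (∑ i, |a i| ^ 2) * ∑ i, ‖y i‖ ^ 2 :=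
      Finset.sum_mul_sq_le_sq_mul_sq _ _ _
    have h3 : (∑ i, |a i| ^ 2) = s := by simp [hs_def, sq_abs]
    calc ‖∑ i, a i • y i‖ ^ 2 ≤ (∑ i, |a i| * ‖y i‖) ^ 2 :=
          pow_le_pow_left₀ (norm_nonneg _) h1 2
      _ ≤ s * ∑ i, ‖y i‖ ^ 2 := h3 ▸ h2
  -- f w is a real number
  have hw_le := isMinOn_iff.mp hw
  have hw_ne_top : f w ≠ ⊤ := by
    intro htop
    have h := hw_le x₀ (mem_univ _)
    rw [htop, EReal.mul_top_of_pos (by exact_mod_cast hs)] at h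
    rw [EReal.top_add_coe] at h
    obtain ⟨t, ht⟩ : ∃ t : ℝ, f x₀ = (t : ℝ) :=
      ⟨(f x₀).toReal, (EReal.coe_toReal hx₀ (hbot x₀)).symm⟩
    rw [ht, ← EReal.coe_mul, ← EReal.coe_add] at h
    exact (EReal.coe_ne_top _) (top_le_iff.mp h)
  obtain ⟨r, hr⟩ : ∃ r : ℝ, f w = (r : ℝ) :=
    ⟨(f w).toReal, (EReal.coe_toReal hw_ne_top (hbot w)).symm⟩
  -- main argument
  rw [isMinOn_iff]
  intro x _
  simp only
  rw [hsum_p, hnorm_p, hr]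
  set u : EuclideanSpace ℝ (Fin d) := ∑ i, a i • x i with hu
  rcases eq_or_ne (f u) ⊤ with htop | hne_top
  · rw [htop, EReal.top_add_coe]
    exact le_top
  obtain ⟨t, ht⟩ : ∃ t : ℝ, f u = (t : ℝ) :=
    ⟨(f u).toReal, (EReal.coe_toReal hne_top (hbot u)).symm⟩
  rw [ht, ← EReal.coe_add, ← EReal.coe_add, EReal.coe_le_coe_iff]
  -- real-valued inequality
  have hmin : s * r + 1 / 2 * ‖w - ζ‖ ^ 2 ≤ s * t + 1 / 2 * ‖u - ζ‖ ^ 2 := by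
    have h := hw_le u (mem_univ _)
    rw [hr, ht, ← EReal.coe_mul, ← EReal.coe_mul, ← EReal.coe_add, ← EReal.coe_add,
      EReal.coe_le_coe_iff] at h
    exact h
  have hcs : ‖u - ζ‖ ^ 2 ≤ s * ∑ i, ‖x i - ξ i‖ ^ 2 := by
    have : u - ζ = ∑ i, a i • (x i - ξ i) := by
      rw [hu, hζ, ← Finset.sum_sub_distrib]
      congr 1; funext i; rw [smul_sub]
    rw [this]; exact key _
  have hwζ : ‖ζ - w‖ = ‖w - ζ‖ := norm_sub_rev _ _
  rw [hwζ]
  have hsinv : 0 < s⁻¹ := inv_pos.mpr hs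
  nlinarith [hs, hsinv, mul_inv_cancel₀ hs.ne']
end
end

section
/- Let r, g : ℝ^d → ℝ ∪ {∞} be closed convex proper, f : ℝ^d → ℝ convex differentiable, α > 0, and define p(z) = (1/α)(x − x') where x = prox_{αr}(z) and x' = prox_{αg}(2x − z − α∇f(x)). Then for all z, z̃ ∈ ℝ^d: α‖p(z) − p(z̃)‖² ≤ ⟨p(z) − p(z̃), z − z̃⟩ − ⟨∇f(x) − ∇f(x̃), x' − x̃'⟩, where x̃, x̃' are defined from z̃ analogously. -/
/-!
Write `u = x - x̃` and `u' = x' - x̃'`, so that `p(z) - p(z̃) = α⁻¹ (u - u')`. Proximal maps of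
convex proper functions are firmly nonexpansive, which gives `‖u‖² ≤ ⟪u, z - z̃⟫` and, since the
second prox is evaluated at `2x - z - α∇f(x)`, `‖u'‖² ≤ ⟪u', 2u - (z - z̃) - α(∇f(x) - ∇f(x̃))⟫`.
Adding the two bounds and expanding `‖u - u'‖²` gives the claim after scaling by `α⁻¹`.
-/

open Set Filter Topology
open scoped RealInnerProductSpace

noncomputable section

section ConvexProper
variable {E : Type*} [AddCommGroup E] [Module ℝ E]

def ConvexProper (h : E → EReal) : Prop :=
  (∀ (a b : ℝ) (x y : E), 0 ≤ a → 0 ≤ b → a + b = 1 →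
    h (a • x + b • y) ≤ (a : EReal) * h x + (b : EReal) * h y) ∧
  (∀ x, h x ≠ ⊥) ∧ (∃ x, h x ≠ ⊤)

theorem ConvexProper.const_mul {h : E → EReal} (hh : ConvexProper h) {α : ℝ} (hα : 0 < α) :
    ConvexProper fun x => (α : EReal) * h x := by
  obtain ⟨hconv, hbot, x₀, hx₀⟩ := hh
  have hαE : (0 : EReal) < α := by exact_mod_cast hα
  refine ⟨fun a b x y ha hb hab => ?_, fun x => ?_, x₀, ?_⟩
  · calc (α : EReal) * h (a • x + b • y)
        ≤ α * ((a : EReal) * h x + (b : EReal) * h y) :=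
          mul_le_mul_of_nonneg_left (hconv a b x y ha hb hab) hαE.le
      _ = (a : EReal) * (α * h x) + (b : EReal) * (α * h y) := by
          rw [EReal.left_distrib_of_nonneg_of_ne_top hαE.le (EReal.coe_ne_top α),
            mul_left_comm, mul_left_comm (α : EReal)]
  · exact (EReal.mul_ne_bot _ _).2 ⟨.inl (EReal.coe_ne_bot α), .inr (hbot x),
      .inl (EReal.coe_ne_top α), .inl hαE.le⟩
  · exact (EReal.mul_ne_top _ _).2 ⟨.inl (EReal.coe_ne_bot α), .inl hαE.le,
      .inl (EReal.coe_ne_top α), .inr hx₀⟩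

end ConvexProper

theorem ClosedConvexProper.convexProper {E : Type*} [NormedAddCommGroup E] [NormedSpace ℝ E]
    {h : E → EReal} (hh : ClosedConvexProper h) : ConvexProper h :=
  hh.2

section Prox
variable {E : Type*} [NormedAddCommGroup E] [InnerProductSpace ℝ E] {h : E → EReal} {w v p q : E}

theorem IsProxPt.ne_top (hp : IsProxPt h w p) (htop : ∃ x, h x ≠ ⊤) : h p ≠ ⊤ := by
  obtain ⟨x₀, hx₀⟩ := htop
  intro hp_top
  have hmin := isMinOn_iff.mp hp x₀ (mem_univ _)
  rw [hp_top, EReal.top_add_of_ne_bot (EReal.coe_ne_bot _)] at hmin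
  exact EReal.add_ne_top hx₀ (EReal.coe_ne_top _) (top_le_iff.mp hmin)

theorem IsProxPt.sub_le_inner (hh : ConvexProper h) (hp : IsProxPt h w p) {y : E} {A B : ℝ}
    (hA : h p = A) (hB : h y = B) : A - B ≤ ⟪p - w, y - p⟫ := by
  -- compare `p` with `(1 - t) • p + t • y` in the prox objective, then let `t → 0`
  have key : ∀ t ∈ Ioo (0 : ℝ) 1, A - B ≤ ⟪p - w, y - p⟫ + t / 2 * ‖y - p‖ ^ 2 := by
    rintro t ⟨ht0, ht1⟩
    have hmin := isMinOn_iff.mp hp ((1 - t) • p + t • y) (mem_univ _)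
    have hconv := hh.1 (1 - t) t p y (by linarith) ht0.le (by ring)
    rw [hA, hB] at hconv
    rw [hA] at hmin
    have hreal : A + 1 / 2 * ‖p - w‖ ^ 2 ≤
        ((1 - t) * A + t * B) + 1 / 2 * ‖(p - w) + t • (y - p)‖ ^ 2 := by
      have hvec : (1 - t) • p + t • y - w = (p - w) + t • (y - p) := by module
      rw [← hvec]
      exact_mod_cast hmin.trans (add_le_add_left hconv _)
    rw [norm_add_sq_real, real_inner_smul_right, norm_smul, Real.norm_of_nonneg ht0.le] at hreal
    nlinarith
  have hlim : Tendsto (fun t : ℝ => ⟪p - w, y - p⟫ + t / 2 * ‖y - p‖ ^ 2) (𝓝[>] 0)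
      (𝓝 ⟪p - w, y - p⟫) :=
    tendsto_nhdsWithin_of_tendsto_nhds <| (by fun_prop : Continuous _).tendsto' 0 _ (by simp)
  exact ge_of_tendsto hlim (by filter_upwards [Ioo_mem_nhdsGT one_pos] using key)

theorem IsProxPt.norm_sub_sq_le_inner (hh : ConvexProper h) (hp : IsProxPt h w p)
    (hq : IsProxPt h v q) : ‖p - q‖ ^ 2 ≤ ⟪p - q, w - v⟫ := by
  obtain ⟨A, hA⟩ : ∃ A : ℝ, h p = A :=
    ⟨(h p).toReal, (EReal.coe_toReal (hp.ne_top hh.2.2) (hh.2.1 p)).symm⟩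
  obtain ⟨B, hB⟩ : ∃ B : ℝ, h q = B :=
    ⟨(h q).toReal, (EReal.coe_toReal (hq.ne_top hh.2.2) (hh.2.1 q)).symm⟩
  have hsum : ⟪p - w, q - p⟫ + ⟪q - v, p - q⟫ = ⟪p - q, w - v⟫ - ‖p - q‖ ^ 2 := by
    rw [← real_inner_self_eq_norm_sq]
    simp only [inner_sub_left, inner_sub_right, real_inner_comm]
    ring
  linarith [hp.sub_le_inner hh hA hB, hq.sub_le_inner hh hB hA]

theorem mul_norm_inv_smul_sub_sq_le {α : ℝ} (hα : 0 < α) {u u' ζ δ : E} (hu : ‖u‖ ^ 2 ≤ ⟪u, ζ⟫)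
    (hu' : ‖u'‖ ^ 2 ≤ ⟪u', (2 : ℝ) • u - ζ - α • δ⟫) :
    α * ‖α⁻¹ • (u - u')‖ ^ 2 ≤ ⟪α⁻¹ • (u - u'), ζ⟫ - ⟪δ, u'⟫ := by
  have key : ‖u - u'‖ ^ 2 ≤ ⟪u - u', ζ⟫ - α * ⟪δ, u'⟫ := by
    rw [inner_sub_right, inner_sub_right, real_inner_smul_right, real_inner_smul_right] at hu'
    rw [norm_sub_sq_real, inner_sub_left, real_inner_comm u' δ]
    linarith [real_inner_comm u u']
  rw [norm_smul, real_inner_smul_left, mul_pow, norm_inv, Real.norm_of_nonneg hα.le]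
  calc α * (α⁻¹ ^ 2 * ‖u - u'‖ ^ 2) = α⁻¹ * ‖u - u'‖ ^ 2 := by field_simp
    _ ≤ α⁻¹ * (⟪u - u', ζ⟫ - α * ⟪δ, u'⟫) := by gcongr
    _ = α⁻¹ * ⟪u - u', ζ⟫ - ⟪δ, u'⟫ := by field_simp

end Prox

theorem stmt10_general
    {d : ℕ} (α : ℝ) (hα : 0 < α)
    (r g : EuclideanSpace ℝ (Fin d) → EReal)
    (hr : ClosedConvexProper r) (hg : ClosedConvexProper g)
    (f' : EuclideanSpace ℝ (Fin d) → EuclideanSpace ℝ (Fin d))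
    (Pr Pg : EuclideanSpace ℝ (Fin d) → EuclideanSpace ℝ (Fin d))
    (hPr : ∀ w, IsProxPt (fun x => (α : EReal) * r x) w (Pr w))
    (hPg : ∀ w, IsProxPt (fun x => (α : EReal) * g x) w (Pg w))
    (P : EuclideanSpace ℝ (Fin d) → EuclideanSpace ℝ (Fin d))
    (hP : ∀ z, P z = α⁻¹ • (Pr z - Pg ((2 : ℝ) • Pr z - z - α • f' (Pr z))))
    :
    ∀ z zt : EuclideanSpace ℝ (Fin d),
      α * ‖P z - P zt‖ ^ 2 ≤
        ⟪P z - P zt, z - zt⟫ -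
          ⟪f' (Pr z) - f' (Pr zt),
            Pg ((2 : ℝ) • Pr z - z - α • f' (Pr z)) -
              Pg ((2 : ℝ) • Pr zt - zt - α • f' (Pr zt))⟫ := by
  intro z zt
  have hPdiff : P z - P zt = α⁻¹ • ((Pr z - Pr zt) - (Pg ((2 : ℝ) • Pr z - z - α • f' (Pr z)) -
      Pg ((2 : ℝ) • Pr zt - zt - α • f' (Pr zt)))) := by
    rw [hP, hP]; module
  rw [hPdiff]
  refine mul_norm_inv_smul_sub_sq_le hα
    ((hPr z).norm_sub_sq_le_inner (hr.convexProper.const_mul hα) (hPr zt)) ?_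
  convert (hPg _).norm_sub_sq_le_inner (hg.convexProper.const_mul hα) (hPg _) using 2
  module

/-- Key inequality for the PPG residual operator (n = 1, Davis–Yin type). -/
theorem stmt10
    {d : ℕ} (α : ℝ) (hα : 0 < α)
    (r g : EuclideanSpace ℝ (Fin d) → EReal)
    (hr : ClosedConvexProper r) (hg : ClosedConvexProper g)
    (f : EuclideanSpace ℝ (Fin d) → ℝ) (hfconv : ConvexOn ℝ Set.univ f)
    (f' : EuclideanSpace ℝ (Fin d) → EuclideanSpace ℝ (Fin d))
    (hf' : ∀ x, HasGradientAt f (f' x) x)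
    (Pr Pg : EuclideanSpace ℝ (Fin d) → EuclideanSpace ℝ (Fin d))
    (hPr : ∀ w, IsProxPt (fun x => (α : EReal) * r x) w (Pr w))
    (hPg : ∀ w, IsProxPt (fun x => (α : EReal) * g x) w (Pg w))
    (P : EuclideanSpace ℝ (Fin d) → EuclideanSpace ℝ (Fin d))
    (hP : ∀ z, P z = α⁻¹ • (Pr z - Pg ((2 : ℝ) • Pr z - z - α • f' (Pr z))))
    :
    ∀ z zt : EuclideanSpace ℝ (Fin d),
      α * ‖P z - P zt‖ ^ 2 ≤
        ⟪P z - P zt, z - zt⟫ -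
          ⟪f' (Pr z) - f' (Pr zt),
            Pg ((2 : ℝ) • Pr z - z - α • f' (Pr z)) -
              Pg ((2 : ℝ) • Pr zt - zt - α • f' (Pr zt))⟫ :=
  stmt10_general α hα r g hr hg f' Pr Pg hPr hPg P hP
end
end

section
/- Let r, g : ℝ^d → ℝ ∪ {∞} be closed convex proper, f : ℝ^d → ℝ convex differentiable with L-Lipschitz gradient, and 0 < α < 3/(2L). With p(z) defined as p(z) = (1/α)(prox_{αr}(z) − prox_{αg}(2·prox_{αr}(z) − z − α∇f(prox_{αr}(z)))), for any z, z̃: −⟨p(z) − p(z̃), z − z̃⟩ ≤ α(αL/3 − 1)‖p(z) − p(z̃)‖² − (1/(4L))‖∇f(x) − ∇f(x̃)‖², where x = prox_{αr}(z), x̃ = prox_{αr}(z̃). -/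
/-!
Both proximal maps are firmly nonexpansive, and by Baillon–Haddad (the gradient inequality of a
convex function combined with the descent lemma) `∇f` is `1/L`-cocoercive. If `X` and `Y` are the
increments of the outputs of the first and second proximal step, then `X - Y = α (p z - p z̃)`;
adding the two firm-nonexpansiveness inequalities leaves a cross term `α ⟪∇f x - ∇f x̃, p z - p z̃⟫`,
which Young's inequality trades against `α² L / 3 ‖p z - p z̃‖²` and part of the cocoercivity
bound.
-/

open Set Filter Topology
open scoped RealInnerProductSpace

noncomputable section

section Gradient

variable {E : Type*} [NormedAddCommGroup E] [InnerProductSpace ℝ E] [CompleteSpace E]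
  {f : E → ℝ} {f' : E → E} {L : ℝ}

theorem HasGradientAt.hasDerivAt_comp_add_smul {g x v : E} {t : ℝ}
    (h : HasGradientAt f g (x + t • v)) :
    HasDerivAt (fun s : ℝ => f (x + s • v)) ⟪g, v⟫ t := by
  have hline : HasDerivAt (fun s : ℝ => x + s • v) v t := by
    simpa using ((hasDerivAt_id t).smul_const v).const_add x
  simpa [Function.comp_def] using h.hasFDerivAt.comp_hasDerivAt t hline

theorem ConvexOn.add_inner_le_of_hasGradientAt (hf : ConvexOn ℝ univ f) {g x : E}
    (h : HasGradientAt f g x) (y : E) : f x + ⟪g, y - x⟫ ≤ f y := by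
  have hline : ConvexOn ℝ univ (fun s : ℝ => f (x + s • (y - x))) := by
    simpa [Function.comp_def] using hf.comp_affineMap
      (AffineMap.const ℝ ℝ x + ((LinearMap.id : ℝ →ₗ[ℝ] ℝ).smulRight (y - x)).toAffineMap)
  have hderiv := HasGradientAt.hasDerivAt_comp_add_smul (x := x) (v := y - x) (t := 0)
    (by simpa using h)
  have := hline.le_slope_of_hasDerivAt (mem_univ 0) (mem_univ 1) zero_lt_one hderiv
  simp only [slope_def_field, one_smul, add_sub_cancel, zero_smul, add_zero, sub_zero, div_one]
    at this
  linarith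

theorem le_add_inner_add_sq_of_lipschitz_gradient (hf' : ∀ x, HasGradientAt f (f' x) x)
    (hLip : ∀ x y, ‖f' x - f' y‖ ≤ L * ‖x - y‖) (x y : E) :
    f y ≤ f x + ⟪f' x, y - x⟫ + L / 2 * ‖y - x‖ ^ 2 := by
  set v := y - x
  have hderiv (s : ℝ) : HasDerivAt (fun s : ℝ => f (x + s • v) - s * ⟪f' x, v⟫)
      (⟪f' (x + s • v), v⟫ - ⟪f' x, v⟫) s :=
    (hf' _).hasDerivAt_comp_add_smul.sub (hasDerivAt_mul_const ⟪f' x, v⟫)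
  have hbound (s : ℝ) : HasDerivAt (fun s : ℝ => f x + L / 2 * s ^ 2 * ‖v‖ ^ 2)
      (L * s * ‖v‖ ^ 2) s := by
    refine ((((hasDerivAt_pow 2 s).const_mul (L / 2)).mul_const (‖v‖ ^ 2)).const_add
      (f x)).congr_deriv (by simp only [Nat.cast_ofNat, Nat.add_one_sub_one, pow_one]; ring)
  have key := image_le_of_deriv_right_le_deriv_boundary (a := 0) (b := 1)
    (fun s _ => (hderiv s).continuousAt.continuousWithinAt)
    (fun s _ => (hderiv s).hasDerivWithinAt) (by simp)
    (fun s _ => (hbound s).continuousAt.continuousWithinAt)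
    (fun s _ => (hbound s).hasDerivWithinAt) ?_ (right_mem_Icc.2 zero_le_one)
  · simp only [one_smul, one_mul, one_pow, mul_one] at key
    rw [show x + v = y by simp [v]] at key
    linarith
  rintro s ⟨hs, -⟩
  calc ⟪f' (x + s • v), v⟫ - ⟪f' x, v⟫ = ⟪f' (x + s • v) - f' x, v⟫ := (inner_sub_left ..).symm
    _ ≤ ‖f' (x + s • v) - f' x‖ * ‖v‖ := real_inner_le_norm _ _
    _ ≤ L * ‖s • v‖ * ‖v‖ := by gcongr; simpa using hLip (x + s • v) x
    _ = L * s * ‖v‖ ^ 2 := by rw [norm_smul, Real.norm_of_nonneg hs]; ring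

theorem ConvexOn.add_inner_add_sq_le_of_lipschitz_gradient (hf : ConvexOn ℝ univ f)
    (hf' : ∀ x, HasGradientAt f (f' x) x) (hL : 0 < L)
    (hLip : ∀ x y, ‖f' x - f' y‖ ≤ L * ‖x - y‖) (x y : E) :
    f x + ⟪f' x, y - x⟫ + 1 / (2 * L) * ‖f' y - f' x‖ ^ 2 ≤ f y := by
  set G := f' y - f' x
  set c := y - L⁻¹ • G
  have hlower := hf.add_inner_le_of_hasGradientAt (hf' x) c
  have hupper := le_add_inner_add_sq_of_lipschitz_gradient hf' hLip y c
  rw [show c - x = (y - x) - L⁻¹ • G by simp only [c]; abel, inner_sub_right,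
    real_inner_smul_right] at hlower
  rw [show c - y = (-L⁻¹) • G by simp only [c]; module, real_inner_smul_right, norm_smul,
    Real.norm_eq_abs, abs_neg, abs_of_pos (inv_pos.2 hL)] at hupper
  have hG : L⁻¹ * ⟪f' y, G⟫ - L⁻¹ * ⟪f' x, G⟫ = L⁻¹ * ‖G‖ ^ 2 := by
    rw [← mul_sub, ← inner_sub_left, real_inner_self_eq_norm_sq]
  have hsq : L / 2 * (L⁻¹ * ‖G‖) ^ 2 = L⁻¹ * ‖G‖ ^ 2 - 1 / (2 * L) * ‖G‖ ^ 2 := by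
    field_simp
    ring
  linarith

theorem ConvexOn.cocoercive_of_lipschitz_gradient (hf : ConvexOn ℝ univ f)
    (hf' : ∀ x, HasGradientAt f (f' x) x) (hL : 0 < L)
    (hLip : ∀ x y, ‖f' x - f' y‖ ≤ L * ‖x - y‖) (x y : E) :
    ‖f' x - f' y‖ ^ 2 ≤ L * ⟪f' x - f' y, x - y⟫ := by
  have hxy := hf.add_inner_add_sq_le_of_lipschitz_gradient hf' hL hLip x y
  have hyx := hf.add_inner_add_sq_le_of_lipschitz_gradient hf' hL hLip y x
  have hinner : ⟪f' x, y - x⟫ + ⟪f' y, x - y⟫ = -⟪f' x - f' y, x - y⟫ := by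
    rw [← neg_sub x y, inner_neg_right, inner_sub_left]
    ring
  rw [norm_sub_rev] at hxy
  have hsum : 2 * (1 / (2 * L) * ‖f' x - f' y‖ ^ 2) ≤ ⟪f' x - f' y, x - y⟫ := by linarith
  calc ‖f' x - f' y‖ ^ 2 = L * (2 * (1 / (2 * L) * ‖f' x - f' y‖ ^ 2)) := by field_simp
    _ ≤ L * ⟪f' x - f' y, x - y⟫ := by gcongr

end Gradient

section Convex

variable {E : Type*} [AddCommGroup E] [Module ℝ E] {f : E → EReal}

structure ProperConvex (f : E → EReal) : Prop where
  convex : ∀ (a b : ℝ) (x y : E), 0 ≤ a → 0 ≤ b → a + b = 1 →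
    f (a • x + b • y) ≤ (a : EReal) * f x + (b : EReal) * f y
  ne_bot : ∀ x, f x ≠ ⊥
  exists_ne_top : ∃ x, f x ≠ ⊤

theorem ProperConvex.const_mul (hf : ProperConvex f) {c : ℝ} (hc : 0 ≤ c) :
    ProperConvex fun x => (c : EReal) * f x where
  convex a b x y ha hb hab := by
    calc (c : EReal) * f (a • x + b • y) ≤ c * (a * f x + b * f y) :=
          mul_le_mul_of_nonneg_left (hf.convex a b x y ha hb hab) (EReal.coe_nonneg.2 hc)
      _ = a * (c * f x) + b * (c * f y) := by
          rw [EReal.left_distrib_of_nonneg_of_ne_top (EReal.coe_nonneg.2 hc)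
            (EReal.coe_ne_top c), mul_left_comm, mul_left_comm (c : EReal)]
  ne_bot x := (EReal.mul_ne_bot _ _).2 ⟨.inl (EReal.coe_ne_bot c), .inr (hf.ne_bot x),
    .inl (EReal.coe_ne_top c), .inl (EReal.coe_nonneg.2 hc)⟩
  exists_ne_top := by
    obtain ⟨x, hx⟩ := hf.exists_ne_top
    refine ⟨x, ?_⟩
    lift f x to ℝ using ⟨hx, hf.ne_bot x⟩ with y
    exact EReal.coe_ne_top _

end Convex

theorem ClosedConvexProper.properConvex {E : Type*} [NormedAddCommGroup E] [NormedSpace ℝ E]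
    {f : E → EReal} (hf : ClosedConvexProper f) : ProperConvex f :=
  ⟨hf.2.1, hf.2.2.1, hf.2.2.2⟩

section Prox

variable {E : Type*} [NormedAddCommGroup E] [InnerProductSpace ℝ E] {f : E → EReal}

theorem IsProxPt.ne_top_s11 {z p x : E} (h : IsProxPt f z p) (hx : f x ≠ ⊤) : f p ≠ ⊤ := by
  intro hp
  have hmin := h (mem_univ x)
  simp only [hp, EReal.top_add_coe, top_le_iff] at hmin
  exact EReal.add_ne_top hx (EReal.coe_ne_top _) hmin

theorem IsProxPt.le_add_inner {z p q : E} (h : IsProxPt f z p) (hf : ProperConvex f) {a b : ℝ}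
    (hp : f p = a) (hq : f q = b) : a ≤ b + ⟪p - z, q - p⟫ := by
  have hsmall : ∀ t ∈ Ioo (0 : ℝ) 1, a - b - ⟪p - z, q - p⟫ ≤ t / 2 * ‖q - p‖ ^ 2 := by
    rintro t ⟨ht0, ht1⟩
    have hseg := hf.convex (1 - t) t p q (by linarith) ht0.le (by ring)
    have hmin : f p + ((1 / 2 * ‖p - z‖ ^ 2 : ℝ) : EReal) ≤
        f ((1 - t) • p + t • q) + ((1 / 2 * ‖(1 - t) • p + t • q - z‖ ^ 2 : ℝ) : EReal) :=
      h (mem_univ _)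
    rw [hp, hq] at hseg
    rw [hp] at hmin
    have hreal : a + 1 / 2 * ‖p - z‖ ^ 2 ≤
        (1 - t) * a + t * b + 1 / 2 * ‖(1 - t) • p + t • q - z‖ ^ 2 := by
      exact_mod_cast hmin.trans (add_le_add_left hseg _)
    rw [show (1 - t) • p + t • q - z = (p - z) + t • (q - p) by module, norm_add_sq_real,
      real_inner_smul_right, norm_smul, Real.norm_of_nonneg ht0.le] at hreal
    refine le_of_mul_le_mul_left ?_ ht0
    linarith
  have hlim : Tendsto (fun t : ℝ => t / 2 * ‖q - p‖ ^ 2) (𝓝[>] 0) (𝓝 0) := by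
    have : Continuous (fun t : ℝ => t / 2 * ‖q - p‖ ^ 2) := by fun_prop
    simpa using (this.tendsto 0).mono_left nhdsWithin_le_nhds
  have := ge_of_tendsto hlim (eventually_of_mem (Ioo_mem_nhdsGT one_pos) hsmall)
  linarith

theorem IsProxPt.norm_sub_sq_le_inner_s11 {z₁ z₂ p₁ p₂ : E} (h₁ : IsProxPt f z₁ p₁)
    (hf : ProperConvex f) (h₂ : IsProxPt f z₂ p₂) :
    ‖p₁ - p₂‖ ^ 2 ≤ ⟪z₁ - z₂, p₁ - p₂⟫ := by
  obtain ⟨x, hx⟩ := hf.exists_ne_top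
  have hp₁ := (EReal.coe_toReal (h₁.ne_top_s11 hx) (hf.ne_bot p₁)).symm
  have hp₂ := (EReal.coe_toReal (h₂.ne_top_s11 hx) (hf.ne_bot p₂)).symm
  have h₁₂ := h₁.le_add_inner hf hp₁ hp₂
  have h₂₁ := h₂.le_add_inner hf hp₂ hp₁
  have hinner : ⟪p₁ - z₁, p₂ - p₁⟫ + ⟪p₂ - z₂, p₁ - p₂⟫ =
      ⟪z₁ - z₂, p₁ - p₂⟫ - ‖p₁ - p₂‖ ^ 2 := by
    rw [← neg_sub p₁ p₂, inner_neg_right, ← real_inner_self_eq_norm_sq, ← sub_eq_neg_add,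
      ← inner_sub_left, ← inner_sub_left]
    congr 1
    abel
  linarith

end Prox

section Estimate

variable {E : Type*} [NormedAddCommGroup E] [InnerProductSpace ℝ E]

-- `X`, `Y`: increments of the two proximal outputs, `u`: of the input, `G`: of the gradient,
-- `Δ`: of the residual.
theorem neg_inner_le_of_prox_estimates {X Y u G Δ : E} {α L : ℝ} (hα : 0 < α) (hL : 0 < L)
    (hX : ‖X‖ ^ 2 ≤ ⟪u, X⟫) (hY : ‖Y‖ ^ 2 ≤ ⟪(2 : ℝ) • X - u - α • G, Y⟫)
    (hG : ‖G‖ ^ 2 ≤ L * ⟪G, X⟫) (hΔ : X - Y = α • Δ) :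
    -⟪Δ, u⟫ ≤ α * (α * L / 3 - 1) * ‖Δ‖ ^ 2 - 1 / (4 * L) * ‖G‖ ^ 2 := by
  obtain rfl : Y = X - α • Δ := by rw [← hΔ]; abel
  have hsplit : α * ‖Δ‖ ^ 2 ≤ ⟪Δ, u⟫ - ⟪G, X⟫ + α * ⟪G, Δ⟫ := by
    refine le_of_mul_le_mul_left ?_ hα
    rw [norm_sub_sq_real, norm_smul, Real.norm_of_nonneg hα.le, mul_pow] at hY
    simp only [inner_sub_left, inner_sub_right, real_inner_smul_left, real_inner_smul_right,
      real_inner_self_eq_norm_sq, real_inner_comm Δ u] at hY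
    linarith
  -- Young's inequality, weighted so that it consumes `3/4` of the cocoercivity bound `‖G‖²/L`.
  have hyoung : α * ⟪G, Δ⟫ ≤ 3 / (4 * L) * ‖G‖ ^ 2 + α ^ 2 * L / 3 * ‖Δ‖ ^ 2 := by
    have := sq_nonneg ‖G - (2 * α * L / 3) • Δ‖
    rw [norm_sub_sq_real, norm_smul, Real.norm_of_nonneg (by positivity),
      real_inner_smul_right] at this
    field_simp
    linarith
  have hcoco : ‖G‖ ^ 2 / L ≤ ⟪G, X⟫ := by rwa [div_le_iff₀' hL]
  calc -⟪Δ, u⟫ ≤ -(α * ‖Δ‖ ^ 2) - ‖G‖ ^ 2 / L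
        + (3 / (4 * L) * ‖G‖ ^ 2 + α ^ 2 * L / 3 * ‖Δ‖ ^ 2) := by linarith
    _ = α * (α * L / 3 - 1) * ‖Δ‖ ^ 2 - 1 / (4 * L) * ‖G‖ ^ 2 := by field_simp; ring

end Estimate

theorem stmt11_general
    {d : ℕ} (α : ℝ) (hα : 0 < α)
    (r g : EuclideanSpace ℝ (Fin d) → EReal)
    (hr : ClosedConvexProper r) (hg : ClosedConvexProper g)
    (f : EuclideanSpace ℝ (Fin d) → ℝ) (hfconv : ConvexOn ℝ Set.univ f)
    (f' : EuclideanSpace ℝ (Fin d) → EuclideanSpace ℝ (Fin d))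
    (hf' : ∀ x, HasGradientAt f (f' x) x)
    (Pr Pg : EuclideanSpace ℝ (Fin d) → EuclideanSpace ℝ (Fin d))
    (hPr : ∀ w, IsProxPt (fun x => (α : EReal) * r x) w (Pr w))
    (hPg : ∀ w, IsProxPt (fun x => (α : EReal) * g x) w (Pg w))
    (P : EuclideanSpace ℝ (Fin d) → EuclideanSpace ℝ (Fin d))
    (hP : ∀ z, P z = α⁻¹ • (Pr z - Pg ((2 : ℝ) • Pr z - z - α • f' (Pr z))))
    (L : ℝ) (hL : 0 < L)
    (hLip : ∀ x y, ‖f' x - f' y‖ ≤ L * ‖x - y‖) :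
    ∀ z zt : EuclideanSpace ℝ (Fin d),
      -⟪P z - P zt, z - zt⟫ ≤
        α * (α * L / 3 - 1) * ‖P z - P zt‖ ^ 2 -
          1 / (4 * L) * ‖f' (Pr z) - f' (Pr zt)‖ ^ 2 := by
  intro z zt
  have hr' := hr.properConvex.const_mul hα.le
  have hg' := hg.properConvex.const_mul hα.le
  refine neg_inner_le_of_prox_estimates
    (Y := Pg ((2 : ℝ) • Pr z - z - α • f' (Pr z)) - Pg ((2 : ℝ) • Pr zt - zt - α • f' (Pr zt)))
    hα hL ((hPr z).norm_sub_sq_le_inner_s11 hr' (hPr zt)) ?_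
    (hfconv.cocoercive_of_lipschitz_gradient hf' hL hLip _ _) ?_
  · convert (hPg _).norm_sub_sq_le_inner_s11 hg' (hPg _) using 2
    module
  · rw [hP, hP, ← smul_sub, smul_inv_smul₀ hα.ne']
    abel

/-- Combined cocoercivity inequality for the PPG residual operator. -/
theorem stmt11
    {d : ℕ} (α : ℝ) (hα : 0 < α)
    (r g : EuclideanSpace ℝ (Fin d) → EReal)
    (hr : ClosedConvexProper r) (hg : ClosedConvexProper g)
    (f : EuclideanSpace ℝ (Fin d) → ℝ) (hfconv : ConvexOn ℝ Set.univ f)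
    (f' : EuclideanSpace ℝ (Fin d) → EuclideanSpace ℝ (Fin d))
    (hf' : ∀ x, HasGradientAt f (f' x) x)
    (Pr Pg : EuclideanSpace ℝ (Fin d) → EuclideanSpace ℝ (Fin d))
    (hPr : ∀ w, IsProxPt (fun x => (α : EReal) * r x) w (Pr w))
    (hPg : ∀ w, IsProxPt (fun x => (α : EReal) * g x) w (Pg w))
    (P : EuclideanSpace ℝ (Fin d) → EuclideanSpace ℝ (Fin d))
    (hP : ∀ z, P z = α⁻¹ • (Pr z - Pg ((2 : ℝ) • Pr z - z - α • f' (Pr z))))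
    (L : ℝ) (hL : 0 < L)
    (hLip : ∀ x y, ‖f' x - f' y‖ ≤ L * ‖x - y‖)
    (hαL : α < 3 / (2 * L)) :
    ∀ z zt : EuclideanSpace ℝ (Fin d),
      -⟪P z - P zt, z - zt⟫ ≤
        α * (α * L / 3 - 1) * ‖P z - P zt‖ ^ 2 -
          1 / (4 * L) * ‖f' (Pr z) - f' (Pr zt)‖ ^ 2 :=
  stmt11_general α hα r g hr hg f hfconv f' hf' Pr Pg hPr hPg P hP L hL hLip
end
end

section
/- Let r, g closed convex proper and f convex differentiable. A point z* satisfies p(z*) = 0 (i.e., is a fixed point of the PPG iteration with n = 1) if and only if x* = prox_{αr}(z*) minimizes r + f + g, with z* = x* + αν* where ν* ∈ ∂r(x*) satisfies −ν* ∈ ∇f(x*) + ∂g(x*). -/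
/-!
A prox point `p = prox_{αr}(w)` is characterized by first-order optimality of the prox
objective: `α⁻¹ • (w - p)` is a subgradient of `r` at `p`. This follows by comparing `p` with the
points `p + t • (y - p)` via convexity and letting `t → 0`; conversely, the quadratic term makes
`p` the unique prox point of `p + α • u` whenever `u ∈ ∂r(p)`.

With `x = prox_{αr}(z)` and `ν = α⁻¹ • (z - x) ∈ ∂r(x)`, the second prox in `p(z)` is taken at
`x + α • u` for `u = -ν - ∇f(x)`. So `p(z) = 0` says exactly that this prox returns `x`, i.e.
that `u ∈ ∂g(x)`; then `0 = ν + ∇f(x) + u ∈ ∂(r + f + g)(x)` and `x` is a minimizer.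
-/

open Set Filter Topology
open scoped RealInnerProductSpace

noncomputable section

variable {E : Type*} [NormedAddCommGroup E] [InnerProductSpace ℝ E]

def ConvexEReal {F : Type*} [AddCommGroup F] [Module ℝ F] (r : F → EReal) : Prop :=
  ∀ (a b : ℝ) (x y : F), 0 ≤ a → 0 ≤ b → a + b = 1 →
    r (a • x + b • y) ≤ (a : EReal) * r x + (b : EReal) * r y

def HasSubgradientAt (r : E → EReal) (v x : E) : Prop :=
  ∀ y, r x + ((⟪v, y - x⟫ : ℝ) : EReal) ≤ r y

theorem le_of_forall_le_add_mul {a b c : ℝ} (h : ∀ t : ℝ, 0 < t → t ≤ 1 → a ≤ b + t * c) :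
    a ≤ b := by
  have hlim : Tendsto (fun t : ℝ => b + t * c) (𝓝[>] 0) (𝓝 b) :=
    ((by fun_prop : Continuous fun t : ℝ => b + t * c).tendsto' 0 b (by simp)).mono_left
      nhdsWithin_le_nhds
  refine ge_of_tendsto hlim ?_
  filter_upwards [Ioc_mem_nhdsGT zero_lt_one] with t ht using h t ht.1 ht.2

theorem ConvexOn.hasSubgradientAt_of_hasGradientAt [CompleteSpace E] {f : E → ℝ}
    (hf : ConvexOn ℝ univ f) {v x : E} (hv : HasGradientAt f v x) :
    HasSubgradientAt (fun y => (f y : EReal)) v x := by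
  intro y
  show (f x : EReal) + _ ≤ f y
  norm_cast
  set φ : ℝ → ℝ := f ∘ AffineMap.lineMap x y
  have hφ : ConvexOn ℝ univ φ := hf.comp_affineMap (AffineMap.lineMap x y)
  have hderiv : HasDerivAt φ ⟪v, y - x⟫ 0 := by
    have hv' : HasFDerivAt f (InnerProductSpace.toDual ℝ E v)
        (AffineMap.lineMap (k := ℝ) x y 0) := by simpa using hv.hasFDerivAt
    simpa using hv'.comp_hasDerivAt 0 AffineMap.hasDerivAt_lineMap
  have hslope := hφ.le_slope_of_hasDerivAt (mem_univ 0) (mem_univ 1) zero_lt_one hderiv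
  simp only [φ, slope_def_field, Function.comp_apply, AffineMap.lineMap_apply_one,
    AffineMap.lineMap_apply_zero, sub_zero, div_one] at hslope
  linarith

theorem HasSubgradientAt.add {r s : E → EReal} {u v x : E} (hr : HasSubgradientAt r u x)
    (hs : HasSubgradientAt s v x) : HasSubgradientAt (fun y => r y + s y) (u + v) x := by
  intro y
  calc r x + s x + ((⟪u + v, y - x⟫ : ℝ) : EReal)
      = (r x + ((⟪u, y - x⟫ : ℝ) : EReal)) + (s x + ((⟪v, y - x⟫ : ℝ) : EReal)) := by
        rw [inner_add_left, EReal.coe_add]; ac_rfl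
    _ ≤ r y + s y := add_le_add (hr y) (hs y)

theorem HasSubgradientAt.isMinOn {r : E → EReal} {x : E} (h : HasSubgradientAt r 0 x) :
    IsMinOn r univ x :=
  isMinOn_iff.mpr fun y _ => by simpa using h y

theorem HasSubgradientAt.ne_top {r : E → EReal} {v x y : E} (h : HasSubgradientAt r v x)
    (hy : r y ≠ ⊤) : r x ≠ ⊤ :=
  fun hx => hy (by simpa [hx] using h y)

theorem IsProxPt.le {f : E → EReal} {x₀ p : E} (h : IsProxPt f x₀ p) (x : E) :
    f p + ((1 / 2 * ‖p - x₀‖ ^ 2 : ℝ) : EReal) ≤ f x + ((1 / 2 * ‖x - x₀‖ ^ 2 : ℝ) : EReal) :=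
  isMinOn_iff.mp h x (mem_univ x)

theorem norm_add_smul_sq_real (a b : E) (t : ℝ) :
    ‖a + t • b‖ ^ 2 = ‖a‖ ^ 2 + 2 * t * ⟪a, b⟫ + t ^ 2 * ‖b‖ ^ 2 := by
  rw [norm_add_sq_real, real_inner_smul_right, norm_smul, mul_pow, Real.norm_eq_abs, sq_abs]
  ring

theorem IsProxPt.hasSubgradientAt {α : ℝ} (hα : 0 < α) {r : E → EReal} (hconv : ConvexEReal r)
    (hbot : ∀ x, r x ≠ ⊥) {w p : E} (hp : IsProxPt (fun x => (α : EReal) * r x) w p) :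
    HasSubgradientAt r (α⁻¹ • (w - p)) p := by
  intro y
  rcases eq_or_ne (r y) ⊤ with hy | hy
  · simp [hy]
  have hpy := hp.le y
  lift r y to ℝ using ⟨hy, hbot y⟩ with b hb
  have hptop : r p ≠ ⊤ := by
    rintro hrp
    simp [hrp, EReal.coe_mul_top_of_pos hα, ← EReal.coe_mul, ← EReal.coe_add] at hpy
  lift r p to ℝ using ⟨hptop, hbot p⟩ with a ha
  have key : ∀ t : ℝ, 0 < t → t ≤ 1 →
      ⟪w - p, y - p⟫ ≤ α * (b - a) + t * (‖y - p‖ ^ 2 / 2) := by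
    intro t ht0 ht1
    have hcv := hconv (1 - t) t p y (by linarith) ht0.le (by ring)
    rw [← ha, ← hb, ← EReal.coe_mul, ← EReal.coe_mul, ← EReal.coe_add,
      show (1 - t) • p + t • y = p + t • (y - p) by module] at hcv
    have hm := hp.le (p + t • (y - p))
    lift r (p + t • (y - p)) to ℝ using
      ⟨ne_top_of_le_ne_top (EReal.coe_ne_top _) hcv, hbot _⟩ with c hc
    rw [← ha, ← EReal.coe_mul, ← EReal.coe_mul, ← EReal.coe_add, ← EReal.coe_add,
      EReal.coe_le_coe_iff, show p + t • (y - p) - w = p - w + t • (y - p) by abel,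
      norm_add_smul_sq_real] at hm
    rw [EReal.coe_le_coe_iff] at hcv
    have hinner : ⟪w - p, y - p⟫ = -⟪p - w, y - p⟫ := by rw [← neg_sub p w, inner_neg_left]
    refine le_of_mul_le_mul_left ?_ ht0
    nlinarith [mul_le_mul_of_nonneg_left hcv hα.le]
  have hlim := le_of_forall_le_add_mul key
  rw [← EReal.coe_add, EReal.coe_le_coe_iff, real_inner_smul_left]
  have := (inv_mul_le_iff₀ hα).mpr hlim
  linarith

theorem IsProxPt.eq_of_hasSubgradientAt {α : ℝ} (hα : 0 < α) {r : E → EReal} {p u q : E}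
    (htop : r p ≠ ⊤) (hbot : r p ≠ ⊥) (hu : HasSubgradientAt r u p)
    (hq : IsProxPt (fun x => (α : EReal) * r x) (p + α • u) q) : q = p := by
  have hqp := hq.le p
  have huq := hu q
  lift r p to ℝ using ⟨htop, hbot⟩ with a ha
  lift r q to ℝ using
    ⟨fun h => by simp [h, EReal.coe_mul_top_of_pos hα, ← EReal.coe_mul, ← EReal.coe_add] at hqp,
      ne_bot_of_le_ne_bot (by simp [← EReal.coe_add]) huq⟩ with b hb
  rw [← EReal.coe_mul, ← EReal.coe_mul, ← EReal.coe_add, ← EReal.coe_add,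
    EReal.coe_le_coe_iff, show q - (p + α • u) = q - p + (-α) • u by module,
    norm_add_smul_sq_real, real_inner_comm, show p - (p + α • u) = (-α) • u by module,
    norm_smul, mul_pow, Real.norm_eq_abs, sq_abs] at hqp
  rw [← EReal.coe_add, EReal.coe_le_coe_iff] at huq
  have hsq : ‖q - p‖ ^ 2 ≤ 0 := by
    nlinarith [mul_le_mul_of_nonneg_left huq hα.le]
  simpa [sub_eq_zero] using (pow_eq_zero_iff two_ne_zero).mp (le_antisymm hsq (sq_nonneg _))

/-- Fixed points of the PPG iteration encode primal-dual solutions. -/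
theorem stmt16
    {d : ℕ} (α : ℝ) (hα : 0 < α)
    (r g : EuclideanSpace ℝ (Fin d) → EReal)
    (hr : ClosedConvexProper r) (hg : ClosedConvexProper g)
    (f : EuclideanSpace ℝ (Fin d) → ℝ) (hfconv : ConvexOn ℝ Set.univ f)
    (f' : EuclideanSpace ℝ (Fin d) → EuclideanSpace ℝ (Fin d))
    (hf' : ∀ x, HasGradientAt f (f' x) x)
    (Pr Pg : EuclideanSpace ℝ (Fin d) → EuclideanSpace ℝ (Fin d))
    (hPr : ∀ w, IsProxPt (fun x => (α : EReal) * r x) w (Pr w))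
    (hPg : ∀ w, IsProxPt (fun x => (α : EReal) * g x) w (Pg w))
    (P : EuclideanSpace ℝ (Fin d) → EuclideanSpace ℝ (Fin d))
    (hP : ∀ z, P z = α⁻¹ • (Pr z - Pg ((2 : ℝ) • Pr z - z - α • f' (Pr z))))
    (zs : EuclideanSpace ℝ (Fin d)) :
    P zs = 0 ↔
      (IsMinOn (fun x => r x + (f x : EReal) + g x) Set.univ (Pr zs) ∧
        ∃ ν u : EuclideanSpace ℝ (Fin d),
          (∀ y, r (Pr zs) + ((⟪ν, y - Pr zs⟫ : ℝ) : EReal) ≤ r y) ∧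
          (∀ y, g (Pr zs) + ((⟪u, y - Pr zs⟫ : ℝ) : EReal) ≤ g y) ∧
          zs = Pr zs + α • ν ∧ -ν = f' (Pr zs) + u) := by
  obtain ⟨-, hrconv, hrbot, -⟩ := hr
  obtain ⟨-, hgconv, hgbot, y₀, hy₀⟩ := hg
  rw [hP, smul_eq_zero, sub_eq_zero, or_iff_right (inv_ne_zero hα.ne')]
  set x := Pr zs
  constructor
  · intro hx
    have hν := (hPr zs).hasSubgradientAt hα hrconv hrbot
    have hu := (hPg ((2 : ℝ) • x - zs - α • f' x)).hasSubgradientAt hα hgconv hgbot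
    rw [← hx] at hu
    have hsum : α⁻¹ • (zs - x) + f' x + α⁻¹ • ((2 : ℝ) • x - zs - α • f' x - x) = 0 := by
      rw [add_right_comm, ← smul_add, show zs - x + ((2 : ℝ) • x - zs - α • f' x - x)
        = -(α • f' x) by module, smul_neg, inv_smul_smul₀ hα.ne', neg_add_cancel]
    have hopt := (hν.add (hfconv.hasSubgradientAt_of_hasGradientAt (hf' x))).add hu
    rw [hsum] at hopt
    refine ⟨hopt.isMinOn, _, _, hν, hu, by rw [smul_inv_smul₀ hα.ne']; abel, ?_⟩
    exact neg_eq_of_add_eq_zero_right (by rw [← add_assoc, hsum])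
  · rintro ⟨-, ν, u, -, (hu : HasSubgradientAt g u x), hzs, hνu⟩
    have hw : (2 : ℝ) • x - zs - α • f' x = x + α • u := by
      rw [hzs, show u = -ν - f' x by rw [hνu]; abel]
      module
    rw [hw]
    exact ((hPg (x + α • u)).eq_of_hasSubgradientAt hα (hu.ne_top hy₀) (hgbot x) hu).symm
end
end

section
/- (SVM prox formula) Let g(x) = max{1 − y·aᵀx, 0} with a ∈ ℝ^d, a ≠ 0, y ∈ {−1, +1}, and α > 0. Then prox_{αg}(x₀) = x₀ + Π_{[0,α]}((1 − y·aᵀx₀)/‖a‖₂²)·y·a, where Π_{[0,α]} projects onto the interval [0, α]. -/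
open Set Filter Topology
open scoped RealInnerProductSpace

noncomputable section

set_option maxHeartbeats 1000000 in
/-- Closed-form proximal operator of the hinge loss (SVM). -/
theorem stmt18 {d : ℕ} (a : EuclideanSpace ℝ (Fin d)) (ha : a ≠ 0)
    (y : ℝ) (hy : y = -1 ∨ y = 1) (α : ℝ) (hα : 0 < α)
    (x₀ q : EuclideanSpace ℝ (Fin d)) :
    IsProxPtR (fun x => α * max (1 - y * ⟪a, x⟫) 0) x₀ q ↔
      q = x₀ + (min (max ((1 - y * ⟪a, x₀⟫) / ‖a‖ ^ 2) 0) α) • (y • a) := by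
  have hna : (0:ℝ) < ‖a‖ ^ 2 := by
    have : 0 < ‖a‖ := norm_pos_iff.mpr ha
    positivity
  have hy2 : y * y = 1 := by rcases hy with h | h <;> simp [h]
  set na := ‖a‖ ^ 2 with hna_def
  set s₀ := 1 - y * ⟪a, x₀⟫ with hs0
  set r := s₀ / na with hr
  set t := min (max r 0) α with htdef
  set p := x₀ + t • (y • a) with hp
  have hrs : r * na = s₀ := div_mul_cancel₀ _ hna.ne'
  have ht0 : 0 ≤ t := le_min (le_max_right _ _) hα.le
  have htα : t ≤ α := min_le_right _ _
  have hip : ⟪a, p⟫ = ⟪a, x₀⟫ + t * (y * na) := by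
    rw [hp, inner_add_right, real_inner_smul_right, real_inner_smul_right,
      real_inner_self_eq_norm_sq, hna_def]
  have hsp : 1 - y * ⟪a, p⟫ = s₀ - t * na := by
    rw [hip, hs0]
    linear_combination (-(t * na)) * hy2
  set sp := s₀ - t * na with hspdef
  have key : t * sp = α * max sp 0 := by
    rcases le_or_gt r 0 with h | h
    · have ht : t = 0 := by
        rw [htdef, max_eq_right h, min_eq_left hα.le]
      have hs0le : s₀ ≤ 0 := by nlinarith
      have : sp ≤ 0 := by rw [hspdef, ht]; simpa using hs0le
      rw [ht, max_eq_right this]; ring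
    · have hmax : max r 0 = r := max_eq_left h.le
      rcases le_or_gt r α with h2 | h2
      · have ht : t = r := by rw [htdef, hmax, min_eq_left h2]
        have : sp = 0 := by rw [hspdef, ht, hrs]; ring
        rw [this]; simp
      · have ht : t = α := by rw [htdef, hmax, min_eq_right h2.le]
        have hsp0 : 0 ≤ sp := by rw [hspdef, ht]; nlinarith
        rw [max_eq_left hsp0, ht]
  have main : ∀ x : EuclideanSpace ℝ (Fin d),
      α * max (1 - y * ⟪a, p⟫) 0 + 1 / 2 * ‖p - x₀‖ ^ 2 + 1 / 2 * ‖x - p‖ ^ 2 ≤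
      α * max (1 - y * ⟪a, x⟫) 0 + 1 / 2 * ‖x - x₀‖ ^ 2 := by
    intro x
    set sx := 1 - y * ⟪a, x⟫ with hsx
    have hexp : ‖x - x₀‖ ^ 2 = ‖x - p‖ ^ 2 + 2 * ⟪x - p, p - x₀⟫ + ‖p - x₀‖ ^ 2 := by
      have hxx : x - x₀ = (x - p) + (p - x₀) := by abel
      rw [hxx, norm_add_sq_real]
    have hin : ⟪x - p, p - x₀⟫ = t * (sp - sx) := by
      have h1 : p - x₀ = t • (y • a) := by rw [hp]; abel
      rw [h1, real_inner_smul_right, real_inner_smul_right, real_inner_comm,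
        inner_sub_right, hip]
      rw [hsx, hspdef, hs0]
      linear_combination (-(t ^ 2 * na)) * hy2
    have hmaxsx : t * sx ≤ α * max sx 0 := by
      nlinarith [mul_nonneg (sub_nonneg.mpr htα) (le_max_right sx (0:ℝ)),
        mul_nonneg ht0 (sub_nonneg.mpr (le_max_left sx (0:ℝ)))]
    rw [hsp]
    rw [hexp, hin]
    have := key
    nlinarith [this, hmaxsx]
  constructor
  · intro h
    have h1 := isMinOn_iff.mp h p (mem_univ p)
    simp only at h1
    have h2 := main q
    have hq0 : ‖q - p‖ ^ 2 ≤ 0 := by linarith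
    have hn0 : ‖q - p‖ ^ 2 = 0 := le_antisymm hq0 (sq_nonneg _)
    have : q - p = 0 := norm_eq_zero.mp (pow_eq_zero_iff two_ne_zero |>.mp hn0)
    have hqp : q = p := sub_eq_zero.mp this
    rw [hqp, hp]
  · intro h
    have hqp : q = p := by rw [h, hp]
    rw [hqp]
    refine isMinOn_iff.mpr ?_
    intro x _
    have := main x
    simp only
    nlinarith [sq_nonneg ‖x - p‖]
end
end

section
/- Let (zᵏ) be a sequence in a separable real Hilbert space and Z* a nonempty set such that for every z* ∈ Z*, the limit lim_k ‖zᵏ − z*‖ exists almost surely (each on its own measure-one event). Then there is a single measure-one event on which lim_k ‖zᵏ − z*‖ exists simultaneously for all z* ∈ Z*. -/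
open Set Filter Topology
open scoped RealInnerProductSpace

noncomputable section

open MeasureTheory in
/-- Almost-sure existence of limits of distances to a dense set of points extends,
in a separable Hilbert space, to a single measure-one event for all points. -/
theorem stmt19 {H : Type*} [NormedAddCommGroup H] [InnerProductSpace ℝ H]
    [CompleteSpace H] [TopologicalSpace.SeparableSpace H]
    {Ω : Type*} [MeasurableSpace Ω] (μ : Measure Ω) [IsProbabilityMeasure μ]
    (z : ℕ → Ω → H) (Zs : Set H) (hZ : Zs.Nonempty)
    (h : ∀ zs ∈ Zs, ∀ᵐ ω ∂μ, ∃ l : ℝ,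
      Tendsto (fun k => ‖z k ω - zs‖) atTop (𝓝 l)) :
    ∀ᵐ ω ∂μ, ∀ zs ∈ Zs, ∃ l : ℝ,
      Tendsto (fun k => ‖z k ω - zs‖) atTop (𝓝 l) := by
  classical
  -- countable dense subset of Zs
  obtain ⟨s, hsc, hsd⟩ := TopologicalSpace.exists_countable_dense (↥Zs)
  set T : Set H := Subtype.val '' s with hT
  have hTc : T.Countable := hsc.image _
  have hTZ : T ⊆ Zs := by rintro t ⟨⟨t, htZ⟩, -, rfl⟩; exact htZ
  have key : ∀ᵐ ω ∂μ, ∀ t ∈ T, ∃ l : ℝ,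
      Tendsto (fun k => ‖z k ω - t‖) atTop (𝓝 l) :=
    (ae_ball_iff hTc).2 fun t ht => h t (hTZ ht)
  filter_upwards [key] with ω hω zs hzs
  -- density: approximate zs by points of T
  have hdens : ∀ ε > 0, ∃ t ∈ T, ‖zs - t‖ < ε := by
    intro ε hε
    obtain ⟨⟨t, htZ⟩, hts, hdt⟩ := hsd.exists_dist_lt (⟨zs, hzs⟩ : Zs) hε
    refine ⟨t, ⟨⟨t, htZ⟩, hts, rfl⟩, ?_⟩
    simpa [Subtype.dist_eq, dist_eq_norm] using hdt
  -- the sequence of distances is Cauchy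
  have hc : CauchySeq (fun k => ‖z k ω - zs‖) := by
    rw [Metric.cauchySeq_iff']
    intro ε hε
    obtain ⟨t, htT, htd⟩ := hdens (ε / 4) (by linarith)
    obtain ⟨l, hl⟩ := hω t htT
    obtain ⟨N, hN⟩ := Metric.cauchySeq_iff'.1 hl.cauchySeq (ε / 2) (by linarith)
    refine ⟨N, fun n hn => ?_⟩
    have h1 : dist ‖z n ω - t‖ ‖z N ω - t‖ < ε / 2 := hN n hn
    have h2 : ∀ k, |‖z k ω - zs‖ - ‖z k ω - t‖| ≤ ‖zs - t‖ := by
      intro k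
      have := abs_norm_sub_norm_le (z k ω - zs) (z k ω - t)
      have he : z k ω - zs - (z k ω - t) = t - zs := by abel
      rw [he] at this
      simpa [norm_sub_rev] using this
    have h2n := h2 n
    have h2N := h2 N
    rw [Real.dist_eq] at h1 ⊢
    have : |‖z n ω - zs‖ - ‖z N ω - zs‖| ≤
        |‖z n ω - zs‖ - ‖z n ω - t‖| + |‖z n ω - t‖ - ‖z N ω - t‖|
          + |‖z N ω - t‖ - ‖z N ω - zs‖| := by
      have := abs_sub_le (‖z n ω - zs‖) (‖z n ω - t‖) (‖z N ω - zs‖)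
      have h4 := abs_sub_le (‖z n ω - t‖) (‖z N ω - t‖) (‖z N ω - zs‖)
      linarith
    have h5 : |‖z N ω - t‖ - ‖z N ω - zs‖| ≤ ‖zs - t‖ := by
      rw [abs_sub_comm]; exact h2N
    linarith
  exact cauchySeq_tendsto_of_complete hc
end
end
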